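/- Let L be a compact metric space and let ((X_n, α_n))_{n∈ℕ} be a sequence of L-labeled metric spaces such that (i) the collection {X_n : n ∈ ℕ} is uniformly totally bounded, and (ii) for every ε > 0 there exist N ∈ ℕ and δ > 0 such that d_{X_n}(α_n(ℓ), α_n(ℓ')) ≤ ε whenever n ≥ N and d_L(ℓ,ℓ') ≤ δ. Then there exist a subsequence ((X_{n_k}, α_{n_k}))_{k∈ℕ} and an L-labeled metric space (X,α) with α : L → X continuous such that d^L_GH(X_{n_k},α_{n_k};X,α) → 0. -/

import Mathlib

/-!
Uniform total boundedness makes `{Xₙ}` precompact in the Gromov–Hausdorff space, so a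
subsequence converges to a compact space `Y`. In the optimal coupling of `Xₙ` and `Y`, each
label `αₙ ℓ` lies within `d_GH(Xₙ, Y)` of a point `bₙ ℓ ∈ Y`; the maps `bₙ : L → Y` are then
asymptotically equicontinuous, and an Arzelà–Ascoli argument gives a further subsequence
converging uniformly to a continuous `β : L → Y`. The coupling then witnesses
`d^L_GH(Xₙ, αₙ; Y, β) ≤ d_GH(Xₙ, Y) + supₗ d(bₙ ℓ, β ℓ) → 0`. If infinitely many `Xₙ` are
empty, then so is `L`, and the empty labeled space is the limit.
-/

open Filter Topology Metric Set

/-- A `(t,L)`-admissible pseudometric on the disjoint union `X ⊕ Y` of two `L`-labeled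
compact metric spaces `(X, α)` and `(Y, β)`: it is a pseudometric restricting to the
metrics of `X` and `Y`, the Hausdorff distance between `X` and `Y` computed with it is
at most `t`, and `sup_{ℓ ∈ L} d(α ℓ, β ℓ) ≤ t`. -/
def IsAdmissible {L X Y : Type*} [MetricSpace X] [MetricSpace Y]
    (α : L → X) (β : L → Y) (t : ℝ) (d : X ⊕ Y → X ⊕ Y → ℝ) : Prop :=
  (∀ p, d p p = 0) ∧
  (∀ p q, d p q = d q p) ∧
  (∀ p q r, d p r ≤ d p q + d q r) ∧
  (∀ x x' : X, d (Sum.inl x) (Sum.inl x') = dist x x') ∧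
  (∀ y y' : Y, d (Sum.inr y) (Sum.inr y') = dist y y') ∧
  (∀ x : X, ∀ ε > (0 : ℝ), ∃ y : Y, d (Sum.inl x) (Sum.inr y) ≤ t + ε) ∧
  (∀ y : Y, ∀ ε > (0 : ℝ), ∃ x : X, d (Sum.inl x) (Sum.inr y) ≤ t + ε) ∧
  (∀ ℓ : L, d (Sum.inl (α ℓ)) (Sum.inr (β ℓ)) ≤ t)

/-- The labeled Gromov–Hausdorff distance of `(X, α)` and `(Y, β)`. -/
noncomputable def lghDist {L X Y : Type*} [MetricSpace X] [MetricSpace Y]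
    (α : L → X) (β : L → Y) : ℝ :=
  sInf {t : ℝ | 0 ≤ t ∧ ∃ d : X ⊕ Y → X ⊕ Y → ℝ, IsAdmissible α β t d}


/-- A bundled `L`-labeled compact metric space: a compact metric space together with a
labeling `L → carrier`. -/
structure LabeledSpace (L : Type*) where
  carrier : Type*
  [ms : MetricSpace carrier]
  [cs : CompactSpace carrier]
  label : L → carrier

attribute [instance] LabeledSpace.ms LabeledSpace.cs

open GromovHausdorff

section LabeledGromovHausdorff

variable {L X Y : Type*} [MetricSpace X] [MetricSpace Y]

lemma lghDist_nonneg (α : L → X) (β : L → Y) : 0 ≤ lghDist α β :=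
  Real.sInf_nonneg fun _ ht => ht.1

lemma lghDist_eq_zero_of_isEmpty [IsEmpty X] [IsEmpty Y] (α : L → X) (β : L → Y) :
    lghDist α β = 0 := by
  have := Function.isEmpty α
  refine le_antisymm (csInf_le ⟨0, fun _ ht => ht.1⟩ ⟨le_rfl, fun _ _ => 0, fun _ => rfl,
    fun _ _ => rfl, fun _ _ _ => by simp, ?_, ?_, ?_, ?_, ?_⟩) (lghDist_nonneg α β) <;>
  exact fun x => isEmptyElim x

lemma hausdorffEDist_range_ne_top [CompactSpace X] [Nonempty X] [CompactSpace Y] [Nonempty Y]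
    {Z : Type*} [MetricSpace Z] {f : X → Z} {g : Y → Z} (hf : Continuous f) (hg : Continuous g) :
    hausdorffEDist (range f) (range g) ≠ ⊤ :=
  hausdorffEDist_ne_top_of_nonempty_of_bounded (range_nonempty f) (range_nonempty g)
    (isCompact_range hf).isBounded (isCompact_range hg).isBounded

lemma lghDist_le_of_isometry [CompactSpace X] [Nonempty X] [CompactSpace Y] [Nonempty Y]
    {Z : Type*} [MetricSpace Z] {f : X → Z} {g : Y → Z} (hf : Isometry f) (hg : Isometry g)
    {α : L → X} {β : L → Y} {t : ℝ} (hH : hausdorffDist (range f) (range g) ≤ t)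
    (hlab : ∀ ℓ, dist (f (α ℓ)) (g (β ℓ)) ≤ t) : lghDist α β ≤ t := by
  have hfin := hausdorffEDist_range_ne_top hf.continuous hg.continuous
  have hlt : ∀ ε > (0 : ℝ), hausdorffDist (range f) (range g) < t + ε := fun ε hε => by linarith
  refine csInf_le ⟨0, fun _ hs => hs.1⟩ ⟨hausdorffDist_nonneg.trans hH,
    fun p q => dist (Sum.elim f g p) (Sum.elim f g q), fun _ => dist_self _,
    fun _ _ => dist_comm _ _, fun _ _ _ => dist_triangle _ _ _, hf.dist_eq, hg.dist_eq,
    fun x ε hε => ?_, fun y ε hε => ?_, hlab⟩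
  · obtain ⟨_, ⟨y, rfl⟩, hy⟩ :=
      exists_dist_lt_of_hausdorffDist_lt (mem_range_self x) (hlt ε hε) hfin
    exact ⟨y, hy.le⟩
  · obtain ⟨_, ⟨x, rfl⟩, hx⟩ :=
      exists_dist_lt_of_hausdorffDist_lt' (mem_range_self y) (hlt ε hε) hfin
    exact ⟨x, hx.le⟩

end LabeledGromovHausdorff

namespace GromovHausdorff

variable {X Y : Type*} [MetricSpace X] [CompactSpace X] [Nonempty X]
  [MetricSpace Y] [CompactSpace Y] [Nonempty Y]

lemma toGHSpace_ulift : toGHSpace (ULift Y) = toGHSpace Y :=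
  toGHSpace_eq_toGHSpace_iff_isometryEquiv.2 ⟨⟨Equiv.ulift, fun _ _ => rfl⟩⟩

lemma exists_dist_optimalGHInjl_optimalGHInjr_le (x : X) :
    ∃ y : Y, dist (optimalGHInjl X Y x) (optimalGHInjr X Y y) ≤ ghDist X Y := by
  obtain ⟨_, ⟨y, rfl⟩, hy⟩ := (isCompact_range (isometry_optimalGHInjr X Y).continuous)
    |>.exists_infDist_eq_dist (range_nonempty _) (optimalGHInjl X Y x)
  refine ⟨y, hy ▸ hausdorffDist_optimal (X := X) (Y := Y) ▸ ?_⟩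
  exact infDist_le_hausdorffDist_of_mem (mem_range_self x) <| hausdorffEDist_range_ne_top
    (isometry_optimalGHInjl X Y).continuous (isometry_optimalGHInjr X Y).continuous

lemma lghDist_le_ghDist_add {L : Type*} {α : L → X} {b β : L → Y} {s : ℝ} (hs : 0 ≤ s)
    (hb : ∀ ℓ, dist (optimalGHInjl X Y (α ℓ)) (optimalGHInjr X Y (b ℓ)) ≤ ghDist X Y)
    (hbβ : ∀ ℓ, dist (b ℓ) (β ℓ) ≤ s) : lghDist α β ≤ ghDist X Y + s := by
  refine lghDist_le_of_isometry (isometry_optimalGHInjl X Y) (isometry_optimalGHInjr X Y)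
    (by rw [hausdorffDist_optimal]; linarith) fun ℓ => ?_
  calc dist (optimalGHInjl X Y (α ℓ)) (optimalGHInjr X Y (β ℓ))
      ≤ dist (optimalGHInjl X Y (α ℓ)) (optimalGHInjr X Y (b ℓ))
        + dist (optimalGHInjr X Y (b ℓ)) (optimalGHInjr X Y (β ℓ)) := dist_triangle _ _ _
    _ ≤ ghDist X Y + s := by
      rw [(isometry_optimalGHInjr X Y).dist_eq]
      exact add_le_add (hb ℓ) (hbβ ℓ)

end GromovHausdorff

def AsymptoticallyEquicontinuous {L : Type*} {X : ℕ → Type*} [PseudoMetricSpace L]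
    [∀ n, PseudoMetricSpace (X n)] (f : ∀ n, L → X n) : Prop :=
  ∀ ε > (0 : ℝ), ∃ (N : ℕ) (δ : ℝ), 0 < δ ∧
    ∀ n ≥ N, ∀ ℓ ℓ' : L, dist ℓ ℓ' ≤ δ → dist (f n ℓ) (f n ℓ') ≤ ε

namespace AsymptoticallyEquicontinuous

variable {L : Type*} [PseudoMetricSpace L]

lemma comp_strictMono {X : ℕ → Type*} [∀ n, PseudoMetricSpace (X n)] {f : ∀ n, L → X n}
    (hf : AsymptoticallyEquicontinuous f) {φ : ℕ → ℕ} (hφ : StrictMono φ) :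
    AsymptoticallyEquicontinuous fun n => f (φ n) := fun ε hε => by
  obtain ⟨N, δ, hδ, hN⟩ := hf ε hε
  exact ⟨N, δ, hδ, fun n hn => hN (φ n) (hn.trans hφ.le_apply)⟩

lemma of_dist_le_add {X Y : ℕ → Type*} [∀ n, PseudoMetricSpace (X n)]
    [∀ n, PseudoMetricSpace (Y n)] {f : ∀ n, L → X n} {g : ∀ n, L → Y n}
    (hf : AsymptoticallyEquicontinuous f) {t : ℕ → ℝ} (ht : Tendsto t atTop (𝓝 0))
    (hfg : ∀ n ℓ ℓ', dist (g n ℓ) (g n ℓ') ≤ dist (f n ℓ) (f n ℓ') + t n) :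
    AsymptoticallyEquicontinuous g := fun ε hε => by
  obtain ⟨N₁, δ, hδ, hN₁⟩ := hf (ε / 2) (half_pos hε)
  obtain ⟨N₂, hN₂⟩ := eventually_atTop.1 (ht.eventually (gt_mem_nhds (half_pos hε)))
  refine ⟨max N₁ N₂, δ, hδ, fun n hn ℓ ℓ' hℓ => ?_⟩
  have h₁ := hN₁ n (le_of_max_le_left hn) ℓ ℓ' hℓ
  have h₂ := hN₂ n (le_of_max_le_right hn)
  linarith [hfg n ℓ ℓ']

variable {R : Type*} [PseudoMetricSpace R] {b : ℕ → L → R}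

lemma uniformCauchySeqOn [CompactSpace L] (hb : AsymptoticallyEquicontinuous b) {s : Set L}
    (hs : Dense s) (hconv : ∀ ℓ ∈ s, CauchySeq fun n => b n ℓ) :
    UniformCauchySeqOn b atTop univ := by
  refine Metric.uniformCauchySeqOn_iff.2 fun ε hε => ?_
  obtain ⟨N, δ, hδ, hN⟩ := hb (ε / 4) (by positivity)
  obtain ⟨I, hI⟩ := isCompact_univ.elim_finite_subcover (fun c : s => ball (c : L) δ)
    (fun _ => isOpen_ball) fun ℓ _ => by
      obtain ⟨c, hc, hℓc⟩ := hs.exists_dist_lt ℓ hδ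
      exact mem_iUnion.2 ⟨⟨c, hc⟩, hℓc⟩
  choose M hM using fun c : s => Metric.cauchySeq_iff.1 (hconv c c.2) (ε / 2) (half_pos hε)
  refine ⟨max N (I.sup M), fun m hm n hn ℓ _ => ?_⟩
  obtain ⟨c, hcI, hℓc⟩ : ∃ c ∈ I, ℓ ∈ ball (c : L) δ := by simpa using hI (mem_univ ℓ)
  have hMc : M c ≤ max N (I.sup M) := (Finset.le_sup hcI).trans (le_max_right _ _)
  have hm' := hN m (le_of_max_le_left hm) ℓ c (mem_ball.1 hℓc).le
  have hn' := hN n (le_of_max_le_left hn) c ℓ (by rw [dist_comm]; exact (mem_ball.1 hℓc).le)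
  calc dist (b m ℓ) (b n ℓ)
      ≤ dist (b m ℓ) (b m c) + dist (b m c) (b n c) + dist (b n c) (b n ℓ) :=
        dist_triangle4 _ _ _ _
    _ < ε := by linarith [hM c m (hMc.trans hm) n (hMc.trans hn)]

lemma continuous_of_tendstoUniformly (hb : AsymptoticallyEquicontinuous b) {β : L → R}
    (hβ : TendstoUniformly b β atTop) : Continuous β := by
  refine Metric.continuous_iff.2 fun ℓ ε hε => ?_
  obtain ⟨N, δ, hδ, hN⟩ := hb (ε / 2) (half_pos hε)
  obtain ⟨n, hβn, hn⟩ := ((Metric.tendstoUniformly_iff.1 hβ (ε / 4) (by positivity)).and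
    (eventually_ge_atTop N)).exists
  refine ⟨δ, hδ, fun ℓ' hℓ' => ?_⟩
  calc dist (β ℓ') (β ℓ) ≤ dist (β ℓ') (b n ℓ') + dist (b n ℓ') (b n ℓ) + dist (b n ℓ) (β ℓ) :=
        dist_triangle4 _ _ _ _
    _ < ε := by
      rw [dist_comm (b n ℓ)]
      linarith [hβn ℓ, hβn ℓ', hN n hn ℓ' ℓ hℓ'.le]

lemma exists_subseq_tendstoUniformly [CompactSpace L] [CompactSpace R]
    (hb : AsymptoticallyEquicontinuous b) :
    ∃ ψ : ℕ → ℕ, StrictMono ψ ∧ ∃ β : L → R, Continuous β ∧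
      TendstoUniformly (fun n => b (ψ n)) β atTop := by
  obtain ⟨s, hsc, hsd⟩ := TopologicalSpace.exists_countable_dense L
  have := hsc.to_subtype
  obtain ⟨a, ψ, hψ, ha⟩ := CompactSpace.tendsto_subseq fun n (ℓ : s) => b n ℓ
  have hbψ := hb.comp_strictMono hψ
  have hcauchy : UniformCauchySeqOn (fun n => b (ψ n)) atTop univ :=
    hbψ.uniformCauchySeqOn hsd fun ℓ hℓ => (tendsto_pi_nhds.1 ha ⟨ℓ, hℓ⟩).cauchySeq
  choose β hβ using fun ℓ => cauchySeq_tendsto_of_complete (hcauchy.cauchySeq (mem_univ ℓ))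
  have hunif : TendstoUniformly (fun n => b (ψ n)) β atTop :=
    tendstoUniformlyOn_univ.1 (hcauchy.tendstoUniformlyOn_of_tendsto fun ℓ _ => hβ ℓ)
  exact ⟨ψ, hψ, β, hbψ.continuous_of_tendstoUniformly hunif, hunif⟩

end AsymptoticallyEquicontinuous

section Precompactness

variable {L : Type*} [MetricSpace L] {X : ℕ → Type*} [∀ n, MetricSpace (X n)]
  [∀ n, CompactSpace (X n)] [∀ n, Nonempty (X n)]

lemma exists_subseq_tendsto_toGHSpace {D : ℝ} (hdiam : ∀ n, ∀ x y : X n, dist x y ≤ D)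
    (hnet : ∀ ε > (0 : ℝ), ∃ N : ℕ, ∀ n, ∃ s : Finset (X n),
      s.card ≤ N ∧ ∀ x : X n, ∃ y ∈ s, dist x y ≤ ε) :
    ∃ φ : ℕ → ℕ, StrictMono φ ∧ ∃ q : GHSpace,
      Tendsto (fun n => toGHSpace (X (φ n))) atTop (𝓝 q) := by
  classical
  have hD : 0 ≤ D := dist_nonneg.trans (hdiam 0 (Classical.arbitrary _) (Classical.arbitrary _))
  choose K hK using fun m : ℕ => hnet (1 / (m + 1)) (by positivity)
  have htb : TotallyBounded (range fun n => toGHSpace (X n)) := by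
    refine GromovHausdorff.totallyBounded (C := D) (u := fun m => 2 * (1 / (m + 1))) (K := K)
      (by simpa using tendsto_one_div_add_atTop_nhds_zero_nat.const_mul (2 : ℝ)) ?_ ?_
    all_goals
      rintro _ ⟨n, rfl⟩
      obtain ⟨e⟩ := toGHSpace_eq_toGHSpace_iff_isometryEquiv.1 (toGHSpace (X n)).toGHSpace_rep
    · exact diam_le_of_forall_dist_le hD fun x _ y _ => e.dist_eq x y ▸ hdiam n (e x) (e y)
    · intro m
      obtain ⟨s, hs_card, hs_net⟩ := hK m n
      refine ⟨s.image e.symm, (Cardinal.mk_coe_finset).trans_le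
        (Nat.cast_le.2 (Finset.card_image_le.trans hs_card)), fun x _ => ?_⟩
      obtain ⟨y, hy, hxy⟩ := hs_net (e x)
      refine mem_iUnion₂.2 ⟨e.symm y, Finset.mem_coe.2 (Finset.mem_image_of_mem _ hy), ?_⟩
      rw [mem_ball, ← e.dist_eq, e.apply_symm_apply]
      linarith [show (0 : ℝ) < 1 / (m + 1) by positivity]
  obtain ⟨q, -, φ, hφ, hq⟩ := (htb.closure.isCompact_of_isClosed isClosed_closure).tendsto_subseq
    fun n => subset_closure (mem_range_self n)
  exact ⟨φ, hφ, q, hq⟩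

lemma exists_subseq_tendsto_lghDist [CompactSpace L] {Y : Type*} [MetricSpace Y]
    [CompactSpace Y] [Nonempty Y] {α : ∀ n, L → X n} (hα : AsymptoticallyEquicontinuous α)
    (hY : Tendsto (fun n => toGHSpace (X n)) atTop (𝓝 (toGHSpace Y))) :
    ∃ φ : ℕ → ℕ, StrictMono φ ∧ ∃ β : L → Y, Continuous β ∧
      Tendsto (fun n => lghDist (α (φ n)) β) atTop (𝓝 0) := by
  have hgh : Tendsto (fun n => ghDist (X n) Y) atTop (𝓝 0) := tendsto_iff_dist_tendsto_zero.1 hY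
  choose b hb using fun n ℓ => exists_dist_optimalGHInjl_optimalGHInjr_le (Y := Y) (α n ℓ)
  have hb_equi : AsymptoticallyEquicontinuous b :=
    hα.of_dist_le_add (by simpa using hgh.const_mul 2) fun n ℓ ℓ' => by
      let i := optimalGHInjl (X n) Y
      let j := optimalGHInjr (X n) Y
      calc dist (b n ℓ) (b n ℓ') = dist (j (b n ℓ)) (j (b n ℓ')) :=
            ((isometry_optimalGHInjr _ _).dist_eq _ _).symm
        _ ≤ dist (j (b n ℓ)) (i (α n ℓ)) + dist (i (α n ℓ)) (i (α n ℓ'))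
            + dist (i (α n ℓ')) (j (b n ℓ')) := dist_triangle4 _ _ _ _
        _ ≤ dist (α n ℓ) (α n ℓ') + 2 * ghDist (X n) Y := by
          rw [(isometry_optimalGHInjl _ _).dist_eq, dist_comm]
          linarith [hb n ℓ, hb n ℓ']
  obtain ⟨φ, hφ, β, hβ, hunif⟩ := hb_equi.exists_subseq_tendstoUniformly
  refine ⟨φ, hφ, β, hβ, tendsto_order.2 ⟨fun a ha => .of_forall fun n =>
    ha.trans_le (lghDist_nonneg _ _), fun ε hε => ?_⟩⟩
  filter_upwards [(hgh.comp hφ.tendsto_atTop).eventually (gt_mem_nhds (half_pos hε)),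
    Metric.tendstoUniformly_iff.1 hunif (ε / 2) (half_pos hε)] with n hn hn'
  calc lghDist (α (φ n)) β ≤ ghDist (X (φ n)) Y + ε / 2 :=
        lghDist_le_ghDist_add (half_pos hε).le (hb (φ n)) fun ℓ => dist_comm (β ℓ) _ ▸ (hn' ℓ).le
    _ < ε := by simp only [Function.comp_apply] at hn; linarith

end Precompactness

/-- Precompactness for compact label spaces: let `L` be a compact metric space and let
`(Xₙ, αₙ)` be a sequence of `L`-labeled compact metric spaces such that (i) the spaces
`Xₙ` are uniformly totally bounded and (ii) `d(αₙ ℓ, αₙ ℓ') → 0` as `n → ∞` and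
`d_L(ℓ, ℓ') → 0`. Then some subsequence converges in the labeled Gromov–Hausdorff
distance to an `L`-labeled compact metric space whose labeling is continuous. -/
theorem stmt14 {L : Type*} [MetricSpace L] [CompactSpace L] (A : ℕ → LabeledSpace L)
    (hdiam : ∃ D > (0 : ℝ), ∀ n, ∀ x y : (A n).carrier, dist x y ≤ D)
    (hnet : ∀ ε > (0 : ℝ), ∃ N : ℕ, ∀ n, ∃ s : Finset (A n).carrier,
      s.card ≤ N ∧ ∀ x : (A n).carrier, ∃ y ∈ s, dist x y ≤ ε)
    (hequi : ∀ ε > (0 : ℝ), ∃ (N : ℕ) (δ : ℝ), 0 < δ ∧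
      ∀ n ≥ N, ∀ ℓ ℓ' : L, dist ℓ ℓ' ≤ δ → dist ((A n).label ℓ) ((A n).label ℓ') ≤ ε) :
    ∃ φ : ℕ → ℕ, StrictMono φ ∧
      ∃ B : LabeledSpace L, Continuous B.label ∧
        Filter.Tendsto (fun k => lghDist (A (φ k)).label B.label)
          Filter.atTop (nhds 0) := by
  by_cases hempty : ∃ᶠ n in atTop, IsEmpty (A n).carrier
  · obtain ⟨φ, hφ, hφe⟩ := extraction_of_frequently_atTop hempty
    have := hφe 0
    have : IsEmpty L := (A (φ 0)).label.isEmpty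
    refine ⟨φ, hφ, ⟨ULift Empty, isEmptyElim⟩, continuous_of_discreteTopology, ?_⟩
    refine tendsto_const_nhds.congr fun n => ?_
    have := hφe n
    exact (lghDist_eq_zero_of_isEmpty _ _).symm
  · obtain ⟨φ, hφ, hne⟩ := extraction_of_eventually_atTop
      ((not_frequently.1 hempty).mono fun n => not_isEmpty_iff.1)
    have := hne
    obtain ⟨D, -, hD⟩ := hdiam
    obtain ⟨ψ, hψ, q, hq⟩ := exists_subseq_tendsto_toGHSpace (X := fun n => (A (φ n)).carrier)
      (fun n => hD (φ n)) fun ε hε => (hnet ε hε).imp fun N hN n => hN (φ n)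
    -- `q.Rep : Type` is lifted to the universe of the carrier of `B`.
    rw [← q.toGHSpace_rep, ← toGHSpace_ulift.{0, u_3}] at hq
    obtain ⟨χ, hχ, β, hβ, hlim⟩ := exists_subseq_tendsto_lghDist
      ((show AsymptoticallyEquicontinuous fun n => (A n).label from hequi).comp_strictMono
        (φ := fun n => φ (ψ n)) (hφ.comp hψ)) hq
    exact ⟨fun n => φ (ψ (χ n)), (hφ.comp hψ).comp hχ, ⟨ULift q.Rep, β⟩, hβ, hlim⟩
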